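/- Let (M,d) be a proper metric space and μ ∈ P₁(M). If there exists a point m ∈ M with μ({m}) > 1/2, then m is the unique Fréchet median of μ. -/

import Mathlib

/-!
Moving the candidate from the atom `m` to `y` gains exactly `d(m, y)` on the mass `μ {m}` and, by
the triangle inequality, loses at most `d(m, y)` on the remaining mass `μ {m}ᶜ`. Hence
`f_μ(y) - f_μ(m) ≥ d(m, y) (μ {m} - μ {m}ᶜ)`, which is positive for `y ≠ m` once `μ {m} > 1/2`.
-/

open MeasureTheory Metric

lemma integrable_dist_of_integrable_dist {M : Type*} [PseudoMetricSpace M] [MeasurableSpace M]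
    [OpensMeasurableSpace M] {μ : Measure M} [IsFiniteMeasure μ] {x₀ : M}
    (h : Integrable (fun p => dist x₀ p) μ) (y : M) : Integrable (fun p => dist y p) μ := by
  refine ((integrable_const (dist y x₀)).add h).mono'
    (continuous_const.dist continuous_id).aestronglyMeasurable (ae_of_all _ fun p => ?_)
  rw [Real.norm_of_nonneg dist_nonneg]
  exact dist_triangle y x₀ p

lemma dist_mul_sub_measureReal_compl_le_integral_dist_sub {M : Type*} [MetricSpace M]
    [MeasurableSpace M] [OpensMeasurableSpace M] {μ : Measure M} [IsFiniteMeasure μ] {m y : M}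
    (hm : Integrable (fun p => dist m p) μ) (hy : Integrable (fun p => dist y p) μ) :
    dist m y * (μ.real {m} - μ.real {m}ᶜ) ≤ ∫ p, dist y p ∂μ - ∫ p, dist m p ∂μ := by
  have hmeas : MeasurableSet ({m} : Set M) := measurableSet_singleton m
  have hsub : Integrable (fun p => dist y p - dist m p) μ := hy.sub hm
  have on_atom : ∫ p in {m}, (dist y p - dist m p) ∂μ = μ.real {m} * dist m y := by
    rw [setIntegral_congr_fun hmeas (g := fun _ => dist m y) fun p hp => by
      rw [Set.mem_singleton_iff.mp hp, dist_self, sub_zero, dist_comm]]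
    rw [setIntegral_const, smul_eq_mul]
  have off_atom : μ.real {m}ᶜ * -dist m y ≤ ∫ p in {m}ᶜ, (dist y p - dist m p) ∂μ := by
    have hle := setIntegral_mono_on integrableOn_const hsub.integrableOn hmeas.compl
      fun p _ => show -dist m y ≤ dist y p - dist m p by
        linarith [dist_triangle m y p, dist_comm m y]
    rwa [setIntegral_const, smul_eq_mul] at hle
  calc dist m y * (μ.real {m} - μ.real {m}ᶜ)
      = μ.real {m} * dist m y + μ.real {m}ᶜ * -dist m y := by ring
    _ ≤ ∫ p in {m}, (dist y p - dist m p) ∂μ + ∫ p in {m}ᶜ, (dist y p - dist m p) ∂μ := by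
      rw [on_atom]; exact add_le_add_right off_atom _
    _ = ∫ p, dist y p ∂μ - ∫ p, dist m p ∂μ := by
      rw [integral_add_compl hmeas hsub, integral_sub hy hm]

lemma measureReal_compl_lt_measureReal_of_half_lt {Ω : Type*} [MeasurableSpace Ω] {μ : Measure Ω}
    [IsProbabilityMeasure μ] {s : Set Ω} (hs : MeasurableSet s) (h : (1 / 2 : ENNReal) < μ s) :
    μ.real sᶜ < μ.real s := by
  have : (1 / 2 : ℝ) < μ.real s := by
    simpa [measureReal_def] using
      (ENNReal.toReal_lt_toReal (by norm_num) (measure_ne_top μ s)).mpr h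
  rw [probReal_compl_eq_one_sub hs]
  linarith

theorem unique_frechet_median_of_majority_atom_general
    {M : Type*} [MetricSpace M]
    [MeasurableSpace M] [BorelSpace M]
    (μ : Measure M) [IsProbabilityMeasure μ]
    (x₀ : M) (hmom : Integrable (fun p => dist x₀ p) μ)
    (m : M) (hm : (1 / 2 : ENNReal) < μ {m}) :
    (∀ y : M, (∫ p, dist m p ∂μ) ≤ ∫ p, dist y p ∂μ) ∧
      (∀ x : M, (∀ y : M, (∫ p, dist x p ∂μ) ≤ ∫ p, dist y p ∂μ) → x = m) := by
  have hgap : 0 < μ.real {m} - μ.real {m}ᶜ :=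
    sub_pos.mpr (measureReal_compl_lt_measureReal_of_half_lt (measurableSet_singleton m) hm)
  have key (y : M) : dist m y * (μ.real {m} - μ.real {m}ᶜ) ≤
      ∫ p, dist y p ∂μ - ∫ p, dist m p ∂μ :=
    dist_mul_sub_measureReal_compl_le_integral_dist_sub
      (integrable_dist_of_integrable_dist hmom m) (integrable_dist_of_integrable_dist hmom y)
  refine ⟨fun y => ?_, fun x hx => ?_⟩
  · linarith [key y, mul_nonneg (dist_nonneg (x := m) (y := y)) hgap.le]
  · have hdist : dist m x * (μ.real {m} - μ.real {m}ᶜ) ≤ 0 := by linarith [key x, hx m]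
    exact (dist_le_zero.mp (nonpos_of_mul_nonpos_left hdist hgap)).symm

/-- If `μ({m}) > 1/2`, then `m` is the unique Fréchet median of `μ`. -/
theorem unique_frechet_median_of_majority_atom
    {M : Type*} [MetricSpace M] [ProperSpace M]
    [MeasurableSpace M] [BorelSpace M]
    (μ : Measure M) [IsProbabilityMeasure μ]
    (x₀ : M) (hmom : Integrable (fun p => dist x₀ p) μ)
    (m : M) (hm : (1 / 2 : ENNReal) < μ {m}) :
    (∀ y : M, (∫ p, dist m p ∂μ) ≤ ∫ p, dist y p ∂μ) ∧
      (∀ x : M, (∀ y : M, (∫ p, dist x p ∂μ) ≤ ∫ p, dist y p ∂μ) → x = m) :=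
  unique_frechet_median_of_majority_atom_general μ x₀ hmom m hm
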